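/- Suppose X is a complex manifold of dimension n (more generally, a connected space) and X × C is biholomorphic to C^(n+1) but X is not biholomorphic to C^n. Then the involution σ on C^(n+1) ≅ X × C given by σ(x, t) = (x, −t) has fixed point set biholomorphic to X, and hence σ is not conjugate in the biholomorphism group to any linear involution of C^(n+1). -/

import Mathlib

open scoped Manifold

set_option maxHeartbeats 2000000 in
/-- If `X × ℂ` is biholomorphic to `ℂ^(n+1)` (here `ℂ^n × ℂ`) but `X` is not
biholomorphic to `ℂ^n`, then the involution `σ` induced by `(x,t) ↦ (x,−t)` has fixed
point set the image of `X × {0}`, and `σ` is not conjugate (by a biholomorphism of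
`ℂ^(n+1)`) to any linear involution. -/
theorem stmt_10 {n : ℕ} {X : Type*} [TopologicalSpace X]
    [ChartedSpace (EuclideanSpace ℂ (Fin n)) X]
    (Φ : (X × ℂ) ≃ (EuclideanSpace ℂ (Fin n) × ℂ))
    (hΦ : MDifferentiable ((𝓘(ℂ, EuclideanSpace ℂ (Fin n))).prod 𝓘(ℂ, ℂ))
      𝓘(ℂ, EuclideanSpace ℂ (Fin n) × ℂ) Φ)
    (hΦ' : MDifferentiable 𝓘(ℂ, EuclideanSpace ℂ (Fin n) × ℂ)
      ((𝓘(ℂ, EuclideanSpace ℂ (Fin n))).prod 𝓘(ℂ, ℂ)) Φ.symm)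
    (hX : ¬ ∃ e : X ≃ EuclideanSpace ℂ (Fin n),
      MDifferentiable 𝓘(ℂ, EuclideanSpace ℂ (Fin n)) 𝓘(ℂ, EuclideanSpace ℂ (Fin n)) e ∧
      MDifferentiable 𝓘(ℂ, EuclideanSpace ℂ (Fin n)) 𝓘(ℂ, EuclideanSpace ℂ (Fin n)) e.symm) :
    ({p : EuclideanSpace ℂ (Fin n) × ℂ | Φ ((Φ.symm p).1, -(Φ.symm p).2) = p} =
        Φ '' {q : X × ℂ | q.2 = 0}) ∧
    ∀ ψ : (EuclideanSpace ℂ (Fin n) × ℂ) ≃ (EuclideanSpace ℂ (Fin n) × ℂ),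
      Differentiable ℂ ψ → Differentiable ℂ ψ.symm →
      ∀ L : (EuclideanSpace ℂ (Fin n) × ℂ) →ₗ[ℂ] (EuclideanSpace ℂ (Fin n) × ℂ),
        L ∘ₗ L = LinearMap.id →
        ¬ ∀ p : EuclideanSpace ℂ (Fin n) × ℂ,
            ψ (Φ ((Φ.symm p).1, -(Φ.symm p).2)) = L (ψ p) := by
  classical
  constructor
  · ext v
    constructor
    · intro hv
      have h2 : ((Φ.symm v).1, -(Φ.symm v).2) = Φ.symm v := by
        have := congrArg Φ.symm hv
        rwa [Equiv.symm_apply_apply] at this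
      have ht : (Φ.symm v).2 = 0 := by
        have := congrArg Prod.snd h2
        simp only at this
        linear_combination (-1/2 : ℂ) * this
      exact ⟨Φ.symm v, ht, Φ.apply_symm_apply v⟩
    · rintro ⟨q, hq, rfl⟩
      simp only [Set.mem_setOf_eq, Equiv.symm_apply_apply]
      rw [Set.mem_setOf_eq] at hq
      have hpair : ((q.1, -q.2) : X × ℂ) = q := by
        obtain ⟨a, b⟩ := q
        simp only at hq
        simp [hq]
      rw [hpair]
  · rintro ψ hψ hψ' L hL hconj
    apply hX
    have hLL : ∀ v, L (L v) = v := by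
      intro v
      have := DFunLike.congr_fun hL v
      simpa using this
    let p : Submodule ℂ (EuclideanSpace ℂ (Fin n) × ℂ) := LinearMap.ker (L - LinearMap.id)
    have hmem : ∀ v, v ∈ p ↔ L v = v := by
      intro v
      rw [LinearMap.mem_ker, LinearMap.sub_apply, LinearMap.id_apply, sub_eq_zero]
    let π : (EuclideanSpace ℂ (Fin n) × ℂ) →ₗ[ℂ] (EuclideanSpace ℂ (Fin n) × ℂ) :=
      (2⁻¹ : ℂ) • (L + LinearMap.id)
    have hπapp : ∀ v, π v = (2⁻¹ : ℂ) • (L v + v) := fun v => rfl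
    have hπmem : ∀ v, π v ∈ p := by
      intro v
      rw [hmem, hπapp, map_smul, map_add, hLL]
      rw [add_comm]
    have hπfix : ∀ v, L v = v → π v = v := by
      intro v hv
      rw [hπapp, hv, ← two_smul ℂ v, smul_smul]
      norm_num
    have hσq : ∀ q : X × ℂ, ψ (Φ (q.1, -q.2)) = L (ψ (Φ q)) := by
      intro q
      have := hconj (Φ q)
      rwa [Equiv.symm_apply_apply] at this
    have hfix : ∀ x : X, L (ψ (Φ (x, 0))) = ψ (Φ (x, 0)) := by
      intro x
      have := hσq (x, 0)
      simp only [neg_zero] at this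
      exact this.symm
    have hGsnd : ∀ v, L v = v → (Φ.symm (ψ.symm v)).2 = 0 := by
      intro v hv
      have h1 : ψ (Φ ((Φ.symm (ψ.symm v)).1, -(Φ.symm (ψ.symm v)).2)) = v := by
        have := hconj (ψ.symm v)
        rwa [Equiv.apply_symm_apply, hv] at this
      have h2 : Φ ((Φ.symm (ψ.symm v)).1, -(Φ.symm (ψ.symm v)).2) = ψ.symm v :=
        ψ.injective (by rw [h1, Equiv.apply_symm_apply])
      have h3 : ((Φ.symm (ψ.symm v)).1, -(Φ.symm (ψ.symm v)).2) = Φ.symm (ψ.symm v) := by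
        have := congrArg Φ.symm h2
        rwa [Equiv.symm_apply_apply] at this
      have := congrArg Prod.snd h3
      simp only at this
      linear_combination (-1/2 : ℂ) * this
    let πc : (EuclideanSpace ℂ (Fin n) × ℂ) →L[ℂ] ↥p :=
      LinearMap.toContinuousLinearMap (LinearMap.codRestrict p π hπmem)
    have hπcapp : ∀ v, ((πc v : ↥p) : EuclideanSpace ℂ (Fin n) × ℂ) = π v := fun v => rfl
    have hFcoe : ∀ x : X, ((πc (ψ (Φ (x, 0))) : ↥p) : EuclideanSpace ℂ (Fin n) × ℂ)
        = ψ (Φ (x, 0)) := by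
      intro x
      rw [hπcapp]
      exact hπfix _ (hfix x)
    have hleft : ∀ x : X, (Φ.symm (ψ.symm ((πc (ψ (Φ (x, 0))) : ↥p) :
        EuclideanSpace ℂ (Fin n) × ℂ))).1 = x := by
      intro x
      rw [hFcoe]
      simp
    have hright : ∀ v : ↥p, πc (ψ (Φ (((Φ.symm (ψ.symm (v : EuclideanSpace ℂ (Fin n) × ℂ))).1,
        (0 : ℂ)) : X × ℂ))) = v := by
      intro v
      have hv : L (v : EuclideanSpace ℂ (Fin n) × ℂ) = v := (hmem _).mp v.2
      have hsnd := hGsnd (v : EuclideanSpace ℂ (Fin n) × ℂ) hv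
      have hpair : (((Φ.symm (ψ.symm (v : EuclideanSpace ℂ (Fin n) × ℂ))).1, (0 : ℂ)) : X × ℂ)
          = Φ.symm (ψ.symm (v : EuclideanSpace ℂ (Fin n) × ℂ)) := by
        rw [← hsnd]
      apply Subtype.ext
      rw [hπcapp, hpair, Equiv.apply_symm_apply, Equiv.apply_symm_apply]
      exact hπfix _ hv
    let F : X → ↥p := fun x => πc (ψ (Φ (x, 0)))
    let G : ↥p → X := fun v => (Φ.symm (ψ.symm (v : EuclideanSpace ℂ (Fin n) × ℂ))).1
    let e0 : X ≃ ↥p := ⟨F, G, hleft, hright⟩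
    have hFm : MDifferentiable 𝓘(ℂ, EuclideanSpace ℂ (Fin n)) 𝓘(ℂ, ↥p) F := by
      have h1 : MDifferentiable 𝓘(ℂ, EuclideanSpace ℂ (Fin n))
          ((𝓘(ℂ, EuclideanSpace ℂ (Fin n))).prod 𝓘(ℂ, ℂ)) (fun x : X => ((x, 0) : X × ℂ)) :=
        MDifferentiable.prodMk mdifferentiable_id mdifferentiable_const
      have h2 := (hψ.mdifferentiable).comp hΦ
      exact (πc.differentiable.mdifferentiable).comp (h2.comp h1)
    have hGm : MDifferentiable 𝓘(ℂ, ↥p) 𝓘(ℂ, EuclideanSpace ℂ (Fin n)) G := by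
      have h1 : MDifferentiable 𝓘(ℂ, ↥p) 𝓘(ℂ, EuclideanSpace ℂ (Fin n) × ℂ)
          (fun v : ↥p => (v : EuclideanSpace ℂ (Fin n) × ℂ)) :=
        (p.subtypeL.differentiable).mdifferentiable
      have h2 := (hψ'.mdifferentiable).comp h1
      exact mdifferentiable_fst.comp (hΦ'.comp h2)
    let x0 : X := (Φ.symm 0).1
    have hGF : G ∘ F = id := funext hleft
    have hFG : F ∘ G = id := funext hright
    have h1 := mfderiv_comp (I := 𝓘(ℂ, EuclideanSpace ℂ (Fin n))) (I' := 𝓘(ℂ, ↥p))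
      (I'' := 𝓘(ℂ, EuclideanSpace ℂ (Fin n))) x0 (hGm (F x0)) (hFm x0)
    rw [hGF, mfderiv_id] at h1
    have h2 := mfderiv_comp (I := 𝓘(ℂ, ↥p)) (I' := 𝓘(ℂ, EuclideanSpace ℂ (Fin n)))
      (I'' := 𝓘(ℂ, ↥p)) (F x0) (hFm (G (F x0))) (hGm (F x0))
    rw [hFG, mfderiv_id, show G (F x0) = x0 from hleft x0] at h2
    set A := mfderiv 𝓘(ℂ, EuclideanSpace ℂ (Fin n)) 𝓘(ℂ, ↥p) F x0 with hA
    set B := mfderiv 𝓘(ℂ, ↥p) 𝓘(ℂ, EuclideanSpace ℂ (Fin n)) G (F x0) with hB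
    have hcomp1 : A.toLinearMap.comp B.toLinearMap = LinearMap.id := by
      have := congrArg ContinuousLinearMap.toLinearMap h2.symm
      exact this
    have hcomp2 : B.toLinearMap.comp A.toLinearMap = LinearMap.id := by
      have := congrArg ContinuousLinearMap.toLinearMap h1.symm
      rwa [ContinuousLinearMap.toLinearMap_comp, ContinuousLinearMap.coe_id] at this
    have eq1 : (EuclideanSpace ℂ (Fin n)) ≃ₗ[ℂ] ↥p :=
      LinearEquiv.ofLinear A.toLinearMap B.toLinearMap hcomp1 hcomp2
    have hrank : Module.finrank ℂ ↥p = Module.finrank ℂ (EuclideanSpace ℂ (Fin n)) :=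
      eq1.finrank_eq.symm
    obtain ⟨ℓ⟩ := FiniteDimensional.nonempty_linearEquiv_of_finrank_eq hrank
    let ℓc := ℓ.toContinuousLinearEquiv
    refine ⟨e0.trans ℓ.toEquiv, ?_, ?_⟩
    · exact (ℓc.toContinuousLinearMap.differentiable.mdifferentiable).comp hFm
    · exact hGm.comp (ℓc.symm.toContinuousLinearMap.differentiable.mdifferentiable)
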